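/- arXiv:2301.02082 — 8 statements merged into one kernel-verified Lean document; each statement's English description precedes it below -/
import Mathlib

section
/- Let n ≥ 1 and m ∈ ℕ. The number of permutations σ of Fin (2n) satisfying L(σ) = 2((m : ℤ) − n + 1) equals 2n · A(2n−1, m), where A denotes the Eulerian number. Equivalently, the proportion of permutations σ of Fin (2n) (i.e., of height orderings of the 2n interior edges in a random book embedding of K_{2n}) for which the linking number L(σ)/2 of two disjoint strictly increasing n-cycles equals ℓ is A(2n−1, n+ℓ−1)/(2n−1)!. -/
/-- The Eulerian number `A(n, m)`: the number of permutations of `Fin n` with exactly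
`m` ascents, where an ascent of `σ` is an index `k` with `k + 1 < n` and `σ k < σ (k+1)`. -/
def eulerian (n m : ℕ) : ℕ :=
  (Finset.univ.filter (fun σ : Equiv.Perm (Fin n) =>
    (Finset.univ.filter (fun k : Fin n =>
      ∃ h : (k : ℕ) + 1 < n, σ k < σ ⟨(k : ℕ) + 1, h⟩)).card = m)).card

/-- The cyclic signed sum `L(σ) = ∑_j ε_j` where `ε_j = 1` if `σ j < σ (j+1)` and
`ε_j = -1` otherwise, with `j + 1` computed cyclically in `Fin N`. -/
def cyclicSignedSum {N : ℕ} (σ : Equiv.Perm (Fin N)) : ℤ :=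
  ∑ j : Fin N,
    if σ j < σ ⟨((j : ℕ) + 1) % N, Nat.mod_lt _ j.pos⟩ then (1 : ℤ) else -1

/-!
Writing `L(σ) = 2 c(σ) - N`, where `c(σ)` counts cyclic ascents, the theorem asks for the number
of permutations of `Fin (M + 2)` with `m + 1` cyclic ascents. Cyclic ascents are invariant under
rotating the positions, and every permutation is, for exactly one rotation, the rotation of a
permutation that puts the maximal value last, i.e. of the extension of some `τ : Perm (Fin (M + 1))`.
The cyclic ascents of that extension are the ascents of `τ` together with the step into the
maximum (the wrap-around step out of it is a descent), which gives `(M + 2) · A(M + 1, m)`.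
-/

open Finset Equiv

variable {M N : ℕ}

def cyclicAscentCount [NeZero N] (σ : Perm (Fin N)) : ℕ :=
  #{j | σ j < σ (j + 1)}

def ascentCount (τ : Perm (Fin M)) : ℕ :=
  #{k : Fin M | ∃ h : (k : ℕ) + 1 < M, τ k < τ ⟨(k : ℕ) + 1, h⟩}

lemma eulerian_eq_card_ascentCount_eq (m : ℕ) :
    eulerian M m = #{τ : Perm (Fin M) | ascentCount τ = m} := rfl

lemma ascentCount_eq_card_castSucc_lt_succ (τ : Perm (Fin (M + 1))) :
    ascentCount τ = #{k : Fin M | τ k.castSucc < τ k.succ} := by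
  rw [ascentCount, card_filter, card_filter, Fin.sum_univ_castSucc]
  simp [Fin.succ]

lemma Fin.mk_add_one_mod_eq_add_one [NeZero N] (j : Fin N) :
    (⟨((j : ℕ) + 1) % N, Nat.mod_lt _ j.pos⟩ : Fin N) = j + 1 := by
  ext
  simp [Fin.val_add]

lemma cyclicSignedSum_eq [NeZero N] (σ : Perm (Fin N)) :
    cyclicSignedSum σ = 2 * (cyclicAscentCount σ : ℤ) - N := by
  simp only [cyclicSignedSum, cyclicAscentCount, Fin.mk_add_one_mod_eq_add_one, card_filter]
  have hN : (N : ℤ) = ∑ _j : Fin N, 1 := by simp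
  rw [hN, Nat.cast_sum, mul_sum, ← sum_sub_distrib]
  refine sum_congr rfl fun j _ => ?_
  split_ifs <;> norm_num

lemma cyclicAscentCount_addRight_trans [NeZero N] (σ : Perm (Fin N)) (c : Fin N) :
    cyclicAscentCount ((Equiv.addRight c).trans σ) = cyclicAscentCount σ := by
  refine card_nbij' (· + c) (· - c) ?_ ?_ (fun _ _ => add_sub_cancel_right _ _)
    (fun _ _ => sub_add_cancel _ _) <;> intro j <;> simp [add_right_comm]

def extendLast (τ : Perm (Fin M)) : Perm (Fin (M + 1)) :=
  finSuccEquivLast.symm.permCongr τ.optionCongr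

@[simp] lemma extendLast_last (τ : Perm (Fin M)) : extendLast τ (Fin.last M) = Fin.last M := by
  simp [extendLast, finSuccEquivLast_last]

@[simp] lemma extendLast_castSucc (τ : Perm (Fin M)) (k : Fin M) :
    extendLast τ k.castSucc = (τ k).castSucc := by
  simp [extendLast, finSuccEquivLast_castSucc, finSuccEquivLast_symm_some]

lemma extendLast_injective : Function.Injective (extendLast (M := M)) := fun τ τ' h =>
  Equiv.ext fun k => Fin.castSucc_injective _ <| by
    simpa using DFunLike.congr_fun h k.castSucc

lemma cyclicAscentCount_extendLast (τ : Perm (Fin (M + 1))) :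
    cyclicAscentCount (extendLast τ) = ascentCount τ + 1 := by
  rw [ascentCount_eq_card_castSucc_lt_succ, cyclicAscentCount, card_filter, card_filter,
    Fin.sum_univ_castSucc, Fin.sum_univ_castSucc]
  simp only [Fin.coeSucc_eq_succ, Fin.succ_castSucc, extendLast_castSucc, extendLast_last,
    Fin.succ_last]
  simp [Fin.castSucc_lt_last, (Fin.le_last _).not_gt]

def rotateExtendLast (p : Fin (M + 1) × Perm (Fin M)) : Perm (Fin (M + 1)) :=
  (Equiv.addRight p.1).trans (extendLast p.2)

lemma rotateExtendLast_symm_last (p : Fin (M + 1) × Perm (Fin M)) :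
    (rotateExtendLast p).symm (Fin.last M) = Fin.last M - p.1 := by
  rw [Equiv.symm_apply_eq]
  simp [rotateExtendLast]

lemma rotateExtendLast_injective : Function.Injective (rotateExtendLast (M := M)) := by
  rintro ⟨j, τ⟩ ⟨j', τ'⟩ h
  obtain rfl : j = j' := by
    simpa [rotateExtendLast_symm_last] using congrArg (fun σ => σ.symm (Fin.last M)) h
  have hτ : extendLast τ = extendLast τ' :=
    Equiv.ext fun x => by simpa [rotateExtendLast] using DFunLike.congr_fun h (x - j)
  rw [extendLast_injective hτ]

lemma rotateExtendLast_bijective : Function.Bijective (rotateExtendLast (M := M)) := by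
  rw [Fintype.bijective_iff_injective_and_card]
  refine ⟨rotateExtendLast_injective, ?_⟩
  simp [Fintype.card_perm, Nat.factorial_succ]

lemma cyclicAscentCount_rotateExtendLast (p : Fin (M + 2) × Perm (Fin (M + 1))) :
    cyclicAscentCount (rotateExtendLast p) = ascentCount p.2 + 1 := by
  rw [rotateExtendLast, cyclicAscentCount_addRight_trans, cyclicAscentCount_extendLast]

theorem card_cyclicAscentCount_eq_succ (M m : ℕ) :
    #{σ : Perm (Fin (M + 2)) | cyclicAscentCount σ = m + 1} = (M + 2) * eulerian (M + 1) m := by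
  let e := Equiv.ofBijective _ (rotateExtendLast_bijective (M := M + 1))
  calc _ = #((univ : Finset (Fin (M + 2))) ×ˢ
        ({τ | ascentCount τ = m} : Finset (Perm (Fin (M + 1))))) :=
        (card_equiv e fun p => by simp [e, cyclicAscentCount_rotateExtendLast]).symm
    _ = _ := by rw [card_product, card_univ, Fintype.card_fin, eulerian_eq_card_ascentCount_eq]

theorem count_perms_with_linking_general (n m : ℕ) :
    (Finset.univ.filter (fun σ : Equiv.Perm (Fin (2 * n)) =>
      cyclicSignedSum σ = 2 * ((m : ℤ) - n + 1))).card
    = 2 * n * eulerian (2 * n - 1) m := by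
  rcases n.eq_zero_or_pos with rfl | hn
  · simp [cyclicSignedSum]
    omega
  obtain ⟨M, hM⟩ : ∃ M, 2 * n = M + 2 := ⟨2 * n - 2, by omega⟩
  have hMℤ : 2 * (n : ℤ) = M + 2 := by exact_mod_cast hM
  rw [hM, show M + 2 - 1 = M + 1 by omega, ← card_cyclicAscentCount_eq_succ]
  congr 1
  refine filter_congr fun σ _ => ?_
  rw [cyclicSignedSum_eq]
  push_cast
  omega

/-- The number of permutations `σ` of `Fin (2n)` with `L σ = 2 (m - n + 1)` equals
`2n · A(2n - 1, m)`; equivalently, the proportion of height orderings of the `2n` interior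
edges for which the linking number of two disjoint strictly increasing `n`-cycles in a
random book embedding of `K_{2n}` equals `ℓ` is `A(2n-1, n+ℓ-1)/(2n-1)!`. -/
theorem count_perms_with_linking (n m : ℕ) (hn : 1 ≤ n) :
    (Finset.univ.filter (fun σ : Equiv.Perm (Fin (2 * n)) =>
      cyclicSignedSum σ = 2 * ((m : ℤ) - n + 1))).card
    = 2 * n * eulerian (2 * n - 1) m :=
  count_perms_with_linking_general n m
end

section
/- Let n ≥ 1 and m ∈ ℕ. The number of permutations σ of Fin (2n) that fix the top element (σ(2n−1) = 2n−1) and satisfy L(σ) = 2((m : ℤ) − n + 1) equals the Eulerian number A(2n−1, m). -/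
/-!
A permutation of `Fin (k + 2)` fixing the top element is `extendLast τ` for a unique
permutation `τ` of `Fin (k + 1)`. Its cyclic ascents are the ascents of `τ` together with the
position `k`, from which it climbs to the top; the wrap-around step from the top is a descent.
Since `L σ = 2 · #(cyclic ascents) - (k + 2)`, the condition on `L` just fixes the number of
ascents of `τ`.
-/

open Finset Equiv

theorem Finset.sum_ite_one_neg_one {ι : Type*} (s : Finset ι) (p : ι → Prop) [DecidablePred p] :
    ∑ i ∈ s, (if p i then (1 : ℤ) else -1) = 2 * #(s.filter p) - #s := by
  rw [sum_ite, sum_const, sum_const, ← card_filter_add_card_filter_not (s := s) p]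
  simp only [nsmul_eq_mul, mul_one, mul_neg]
  push_cast
  ring

namespace Equiv.Perm

variable {n : ℕ}

def ascents (σ : Perm (Fin n)) : Finset (Fin n) :=
  univ.filter fun k => ∃ h : (k : ℕ) + 1 < n, σ k < σ ⟨k + 1, h⟩

theorem _root_.eulerian_eq_card_ascents (n m : ℕ) :
    eulerian n m = #{σ : Perm (Fin n) | #σ.ascents = m} :=
  rfl

def cyclicAscents (σ : Perm (Fin n)) : Finset (Fin n) :=
  univ.filter fun j => σ j < σ ⟨(j + 1) % n, Nat.mod_lt _ j.pos⟩

theorem cyclicSignedSum_eq_card_cyclicAscents (σ : Perm (Fin n)) :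
    cyclicSignedSum σ = 2 * #σ.cyclicAscents - n := by
  rw [cyclicSignedSum, sum_ite_one_neg_one, card_univ, Fintype.card_fin, cyclicAscents]

def extendLast (τ : Perm (Fin n)) : Perm (Fin (n + 1)) :=
  finSuccEquivLast.symm.permCongr τ.optionCongr

@[simp]
theorem extendLast_castSucc (τ : Perm (Fin n)) (i : Fin n) :
    extendLast τ i.castSucc = (τ i).castSucc := by
  simp [extendLast, finSuccEquivLast_castSucc, finSuccEquivLast_symm_some]

@[simp]
theorem extendLast_last (τ : Perm (Fin n)) : extendLast τ (Fin.last n) = Fin.last n := by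
  simp [extendLast, finSuccEquivLast_last]

theorem extendLast_injective : Function.Injective (extendLast (n := n)) :=
  (permCongr _).injective.comp optionCongr_injective

theorem exists_extendLast_eq {σ : Perm (Fin (n + 1))} (hσ : σ (Fin.last n) = Fin.last n) :
    ∃ τ, extendLast τ = σ := by
  refine ⟨removeNone (finSuccEquivLast.permCongr σ), ?_⟩
  have hnone : finSuccEquivLast.permCongr σ none = none := by
    simp [finSuccEquivLast_last, hσ]
  rw [extendLast, map_equiv_removeNone, hnone, swap_self, ← one_def, one_mul, ← permCongr_symm,
    symm_apply_apply]

theorem card_filter_fixing_last (P : Perm (Fin (n + 1)) → Prop) [DecidablePred P] :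
    #{σ | σ (Fin.last n) = Fin.last n ∧ P σ} = #{τ : Perm (Fin n) | P (extendLast τ)} := by
  refine (card_nbij extendLast ?_ extendLast_injective.injOn ?_).symm
  · intro τ hτ
    simpa using hτ
  · intro σ hσ
    obtain ⟨hfix, hP⟩ := (mem_filter.mp hσ).2
    obtain ⟨τ, rfl⟩ := exists_extendLast_eq hfix
    exact ⟨τ, by simpa using hP, rfl⟩

theorem last_notMem_ascents (τ : Perm (Fin (n + 1))) : Fin.last n ∉ τ.ascents := by
  simp [ascents]

theorem cyclicAscents_extendLast (τ : Perm (Fin (n + 1))) :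
    (extendLast τ).cyclicAscents = (insert (Fin.last n) τ.ascents).map Fin.castSuccEmb := by
  ext j
  induction j using Fin.lastCases with
  | last => simp [cyclicAscents, (Fin.castSucc_ne_last _).symm, Fin.le_last]
  | cast i =>
    have hnext :
        (⟨(i.castSucc + 1) % (n + 2), Nat.mod_lt _ (Nat.succ_pos _)⟩ : Fin (n + 2)) = i.succ :=
      Fin.ext (Nat.mod_eq_of_lt (by rw [Fin.val_castSucc]; omega))
    simp only [cyclicAscents, mem_filter, mem_univ, true_and, hnext, mem_map, mem_insert,
      Fin.castSuccEmb_apply, (Fin.castSucc_injective _).eq_iff, exists_eq_right]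
    induction i using Fin.lastCases with
    | last => simp [Fin.castSucc_lt_last]
    | cast i =>
      simp only [Fin.succ_castSucc, extendLast_castSucc, Fin.castSucc_lt_castSucc_iff]
      simp [ascents, Fin.castSucc_ne_last, Fin.succ]

theorem cyclicSignedSum_extendLast (τ : Perm (Fin (n + 1))) :
    cyclicSignedSum (extendLast τ) = 2 * #τ.ascents - n := by
  rw [cyclicSignedSum_eq_card_cyclicAscents, cyclicAscents_extendLast, card_map,
    card_insert_of_notMem (last_notMem_ascents τ)]
  push_cast
  ring

theorem card_fixing_top_cyclicSignedSum (N m : ℕ) (hN : 2 ≤ N) :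
    #{σ : Perm (Fin N) | σ ⟨N - 1, by omega⟩ = ⟨N - 1, by omega⟩ ∧
      cyclicSignedSum σ = 2 * m - N + 2} = eulerian (N - 1) m := by
  obtain ⟨n, rfl⟩ := Nat.exists_eq_add_of_le' hN
  change #{σ : Perm (Fin (n + 2)) | σ (Fin.last _) = Fin.last _ ∧ _} = _
  rw [card_filter_fixing_last]
  simp_rw [cyclicSignedSum_extendLast]
  rw [eulerian_eq_card_ascents]
  refine congrArg card (filter_congr fun τ _ => ?_)
  omega

end Equiv.Perm

/-- The number of permutations `σ` of `Fin (2n)` fixing the top element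
(`σ (2n - 1) = 2n - 1`) with `L σ = 2 (m - n + 1)` equals the Eulerian number
`A(2n - 1, m)`. -/
theorem count_top_fixing_perms_with_linking (n m : ℕ) (hn : 1 ≤ n) :
    (Finset.univ.filter (fun σ : Equiv.Perm (Fin (2 * n)) =>
      σ ⟨2 * n - 1, by omega⟩ = ⟨2 * n - 1, by omega⟩ ∧
      cyclicSignedSum σ = 2 * ((m : ℤ) - n + 1))).card
    = eulerian (2 * n - 1) m := by
  rw [show 2 * ((m : ℤ) - n + 1) = 2 * m - ((2 * n : ℕ) : ℤ) + 2 by push_cast; ring]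
  exact Perm.card_fixing_top_cyclicSignedSum (2 * n) m (by omega)
end

section
/- For every integer i ≥ 2, 3 · ∑_{σ ∈ Perm(Fin (2i))} L(σ)² = (2i)! · 2i. Equivalently, when σ is chosen uniformly at random from the permutations of Fin (2i), the expected value of (L(σ)/2)², i.e., of the squared linking number of two disjoint strictly increasing i-cycles in the corresponding random book embedding of K_{2i}, equals i/6. -/
open Equiv Finset

section LinearOrder

variable {α : Type*} [LinearOrder α]

def ltSign (a b : α) : ℤ := if a < b then 1 else -1

theorem ltSign_mul_self (a b : α) : ltSign a b * ltSign a b = 1 := by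
  unfold ltSign; split_ifs <;> norm_num

theorem ltSign_swap {a b : α} (h : a ≠ b) : ltSign b a = -ltSign a b := by
  unfold ltSign; split_ifs <;> first | (exfalso; order) | norm_num

theorem ltSign_mul_ltSign_sum_orderings {a b c : α} (hab : a ≠ b) (hac : a ≠ c)
    (hbc : b ≠ c) :
    ltSign a b * ltSign b c + ltSign a c * ltSign c b + ltSign b a * ltSign a c
      + ltSign b c * ltSign c a + ltSign c a * ltSign a b + ltSign c b * ltSign b a = -2 := by
  unfold ltSign; split_ifs <;> first | (exfalso; order) | norm_num

end LinearOrder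

theorem sum_perm_sum_mul_right {α ι M : Type*} [Fintype α] [DecidableEq α] [Fintype ι]
    [AddCommMonoid M] (τ : ι → Perm α) (f : Perm α → M) :
    ∑ σ : Perm α, ∑ i, f (σ * τ i) = Fintype.card ι • ∑ σ : Perm α, f σ := by
  have hinv : ∀ i, ∑ σ : Perm α, f (σ * τ i) = ∑ σ : Perm α, f σ := fun i =>
    Equiv.sum_comp (Equiv.mulRight (τ i)) f
  rw [sum_comm, sum_congr rfl fun i _ => hinv i, sum_const, card_univ]

namespace Fin

variable {N : ℕ} [NeZero N]

theorem add_one_ne_self (hN : 2 ≤ N) (j : Fin N) : j + 1 ≠ j := by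
  rw [Ne, add_eq_left, one_eq_zero_iff]; omega

theorem add_one_add_one_ne_self (hN : 3 ≤ N) (j : Fin N) : j + 1 + 1 ≠ j := by
  rw [add_assoc, Ne, add_eq_left, Fin.ext_iff, val_add, val_one', val_zero,
    Nat.mod_eq_of_lt (show 1 < N by omega), Nat.mod_eq_of_lt (show 1 + 1 < N by omega)]
  omega

end Fin

section Cyclic

variable {N : ℕ} [NeZero N]

def ascentSign (σ : Perm (Fin N)) (j : Fin N) : ℤ := ltSign (σ j) (σ (j + 1))

theorem cyclicSignedSum_eq_sum_ascentSign (σ : Perm (Fin N)) :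
    cyclicSignedSum σ = ∑ j, ascentSign σ j := by
  refine sum_congr rfl fun j _ => ?_
  have hsucc : (⟨((j : ℕ) + 1) % N, Nat.mod_lt _ j.pos⟩ : Fin N) = j + 1 :=
    Fin.ext (by rw [Fin.val_add, Fin.val_one', Nat.add_mod_mod])
  rw [hsucc]; rfl

theorem sum_ascentSign_mul_self (j : Fin N) :
    ∑ σ : Perm (Fin N), ascentSign σ j * ascentSign σ j = N.factorial := by
  simp [ascentSign, ltSign_mul_self, Fintype.card_perm]

theorem sum_ascentSign_mul_of_disjoint {j k : Fin N} (hj : j + 1 ≠ j) (hkj : k ≠ j)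
    (hkj' : k ≠ j + 1) (hkj'' : k + 1 ≠ j) :
    ∑ σ : Perm (Fin N), ascentSign σ j * ascentSign σ k = 0 := by
  have hk1 : k + 1 ≠ j + 1 := fun h => hkj (add_right_cancel h)
  have hcancel : ∀ σ : Perm (Fin N), ∑ i, ascentSign (σ * ![1, swap j (j + 1)] i) j
      * ascentSign (σ * ![1, swap j (j + 1)] i) k = 0 := by
    intro σ
    have hne : σ j ≠ σ (j + 1) := σ.injective.ne hj.symm
    simp only [Fin.sum_univ_two, Matrix.cons_val_zero, Matrix.cons_val_one, Perm.one_apply,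
      ascentSign, Perm.mul_apply, swap_apply_left, swap_apply_right,
      swap_apply_of_ne_of_ne hkj hkj', swap_apply_of_ne_of_ne hkj'' hk1, ltSign_swap hne]
    ring
  have h := sum_perm_sum_mul_right ![1, swap j (j + 1)] fun σ => ascentSign σ j * ascentSign σ k
  rw [sum_congr rfl fun σ _ => hcancel σ, sum_const_zero, Fintype.card_fin] at h
  simpa using h.symm

theorem three_mul_sum_ascentSign_mul_succ {j : Fin N} (h1 : j + 1 ≠ j) (h2 : j + 1 + 1 ≠ j) :
    3 * ∑ σ : Perm (Fin N), ascentSign σ j * ascentSign σ (j + 1) = -N.factorial := by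
  have h3 : j + 1 + 1 ≠ j + 1 := fun h => h1 (add_right_cancel h)
  set s := swap j (j + 1)
  set t := swap (j + 1) (j + 1 + 1)
  -- composing with these six permutations puts `σ j, σ (j + 1), σ (j + 1 + 1)` in all six orders
  have hrearrange : ∀ σ : Perm (Fin N),
      ∑ i, ascentSign (σ * ![1, t, s, s * t, t * s, s * t * s] i) j
        * ascentSign (σ * ![1, t, s, s * t, t * s, s * t * s] i) (j + 1) = -2 := by
    intro σ
    simp only [Fin.sum_univ_six, Matrix.cons_val, Perm.one_apply, ascentSign, Perm.mul_apply, s, t,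
      swap_apply_left, swap_apply_right, swap_apply_of_ne_of_ne h2 h3,
      swap_apply_of_ne_of_ne h1.symm h2.symm]
    exact ltSign_mul_ltSign_sum_orderings (σ.injective.ne h1.symm) (σ.injective.ne h2.symm)
      (σ.injective.ne h3.symm)
  have h := sum_perm_sum_mul_right ![1, t, s, s * t, t * s, s * t * s]
    fun σ => ascentSign σ j * ascentSign σ (j + 1)
  rw [sum_congr rfl fun σ _ => hrearrange σ] at h
  simp only [sum_const, card_univ, Fintype.card_perm, Fintype.card_fin, nsmul_eq_mul] at h
  push_cast at h
  linarith

theorem three_mul_sum_ascentSign_mul (hN : 3 ≤ N) (j k : Fin N) :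
    3 * ∑ σ : Perm (Fin N), ascentSign σ j * ascentSign σ k =
      (if k = j then 3 * (N.factorial : ℤ) else 0)
        - (if k = j + 1 then (N.factorial : ℤ) else 0)
        - (if k = j - 1 then (N.factorial : ℤ) else 0) := by
  have h1 := Fin.add_one_ne_self (by omega : 2 ≤ N)
  have h2 := Fin.add_one_add_one_ne_self hN
  by_cases hkj : k = j
  · subst hkj
    simp [sum_ascentSign_mul_self, eq_sub_iff_add_eq, show N ≠ 1 by omega]
  by_cases hkj' : k = j + 1
  · subst hkj'
    simp [three_mul_sum_ascentSign_mul_succ (h1 j) (h2 j), hkj, eq_sub_iff_add_eq, h2]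
  by_cases hkj'' : k = j - 1
  · obtain rfl : j = k + 1 := eq_sub_iff_add_eq.mp hkj'' |>.symm
    simp_rw [mul_comm (ascentSign _ (k + 1))]
    simp [three_mul_sum_ascentSign_mul_succ (h1 k) (h2 k), hkj, hkj']
  · rw [sum_ascentSign_mul_of_disjoint (h1 j) hkj hkj' fun h => hkj'' (eq_sub_of_add_eq h)]
    simp [hkj, hkj', hkj'']

theorem sum_three_mul_sum_ascentSign_mul (hN : 3 ≤ N) (j : Fin N) :
    ∑ k, 3 * ∑ σ : Perm (Fin N), ascentSign σ j * ascentSign σ k = N.factorial := by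
  simp only [three_mul_sum_ascentSign_mul hN, sum_sub_distrib, sum_ite_eq', mem_univ, if_true]
  ring

end Cyclic

theorem three_mul_sum_cyclicSignedSum_sq {N : ℕ} (hN : 3 ≤ N) :
    3 * ∑ σ : Perm (Fin N), cyclicSignedSum σ ^ 2 = N.factorial * N := by
  have : NeZero N := ⟨by omega⟩
  calc 3 * ∑ σ : Perm (Fin N), cyclicSignedSum σ ^ 2
      = ∑ j, ∑ k, 3 * ∑ σ : Perm (Fin N), ascentSign σ j * ascentSign σ k := by
        simp_rw [cyclicSignedSum_eq_sum_ascentSign, sq, sum_mul_sum, mul_sum]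
        rw [sum_comm]
        exact sum_congr rfl fun j _ => sum_comm
    _ = ∑ _j : Fin N, (N.factorial : ℤ) :=
        sum_congr rfl fun j _ => sum_three_mul_sum_ascentSign_mul hN j
    _ = N.factorial * N := by simp [mul_comm]

/-- For every integer `i ≥ 2`, `3 · ∑_σ L(σ)² = (2i)! · 2i`, summing over all permutations
`σ` of `Fin (2i)`; equivalently, for a uniformly random `σ`, the expected value of
`(L(σ)/2)²`, the squared linking number of two disjoint strictly increasing `i`-cycles in
the corresponding random book embedding of `K_{2i}`, equals `i / 6`. -/
theorem sum_squared_cyclicSignedSum (i : ℕ) (hi : 2 ≤ i) :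
    3 * ∑ σ : Equiv.Perm (Fin (2 * i)), (cyclicSignedSum σ) ^ 2
      = ((2 * i).factorial : ℤ) * (2 * i) := by
  exact_mod_cast three_mul_sum_cyclicSignedSum_sq (by omega : 3 ≤ 2 * i)
end

section
/- Let m, n ≥ 3 and 2 ≤ i ≤ min(m, n). The number of subsets A of ZMod (m+n) with |A| = m, exactly i cyclic blocks, and 0 ∈ A equals C(m, i) · C(n−1, i−1). -/
/-- The number of cyclic blocks of a finite subset `A` of `ZMod N`: the number of
elements `a ∈ A` with `a + 1 ∉ A`. -/
def cyclicBlocks {N : ℕ} (A : Finset (ZMod N)) : ℕ :=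
  (A.filter (fun a => a + 1 ∉ A)).card

/-!
Read a subset `A ∋ 0` of `ZMod (m + n)` as the binary word of its indicator on `0, …, m + n - 1`.
The word starts with a one, so the wrap-around from its last letter to its first creates no block
end, and the cyclic blocks of `A` are exactly the factors `10` of the word. Words starting with a
one, with `k + 1` ones, `z` zeros and `i` factors `10` are counted by recursion on the last letter:
there are `C(k, i) · c(z, i)` of them ending in a one and `C(k, i - 1) · c(z, i)` ending in a zero,
where `c(z, i)` is the number of compositions of `z` into `i` parts. Pascal's rule adds these up
to `C(k + 1, i) · C(z - 1, i - 1)`.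
-/

open Finset

-- `B ⊆ range L` is read as a binary word of length `L`; these are its factors `10`.
def descents (L : ℕ) (B : Finset ℕ) : ℕ := #{a ∈ B | a + 1 ∉ B ∧ a + 1 < L}

lemma descents_eq_sum (L : ℕ) (B : Finset ℕ) :
    descents L B = ∑ a ∈ B, if a + 1 ∉ B ∧ a + 1 < L then 1 else 0 :=
  card_filter _ _

lemma descents_succ {N : ℕ} {B : Finset ℕ} (hB : B ⊆ range (N + 1)) :
    descents (N + 2) B = descents (N + 1) B + if N ∈ B then 1 else 0 := by
  rw [descents_eq_sum, descents_eq_sum, ← sum_ite_eq' B N (fun _ => 1), ← sum_add_distrib]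
  refine sum_congr rfl fun a ha => ?_
  have ha' := mem_range.1 (hB ha)
  have hN : N + 1 ∉ B := fun h => by simpa using hB h
  by_cases h : a = N
  · subst h; simp [hN]
  · have : a + 1 < N + 2 ↔ a + 1 < N + 1 := by omega
    simp only [h, if_false, add_zero, this]

lemma descents_insert_self {L : ℕ} {B : Finset ℕ} (hB : B ⊆ range L) :
    descents (L + 1) (insert L B) = descents L B := by
  have hL : L ∉ B := fun h => by simpa using hB h
  rw [descents_eq_sum, descents_eq_sum, sum_insert hL, if_neg (by omega), zero_add]
  refine sum_congr rfl fun a ha => ?_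
  have ha' := mem_range.1 (hB ha)
  simp only [mem_insert]
  grind

lemma card_filter_powerset_range_succ (N : ℕ) (p : Finset ℕ → Prop) [DecidablePred p] :
    #{B ∈ (range (N + 1)).powerset | p B} =
      #{B ∈ (range N).powerset | p B} + #{B ∈ (range N).powerset | p (insert N B)} := by
  simp only [card_filter, range_add_one]
  exact sum_powerset_insert notMem_range_self _

def wordCount (k z i : ℕ) (endsInOne : Bool) : ℕ :=
  #{B ∈ (range (k + z + 1)).powerset |
    0 ∈ B ∧ #B = k + 1 ∧ descents (k + z + 1) B = i ∧ (k + z ∈ B ↔ endsInOne)}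

lemma wordCount_true_add_false (k z i : ℕ) :
    wordCount k z i true + wordCount k z i false =
      #{B ∈ (range (k + z + 1)).powerset | 0 ∈ B ∧ #B = k + 1 ∧ descents (k + z + 1) B = i} := by
  rw [← card_filter_add_card_filter_not (fun B => k + z ∈ B), filter_filter, filter_filter]
  simp [wordCount, and_assoc]

lemma wordCount_succ_left_true (k z i : ℕ) :
    wordCount (k + 1) z i true = wordCount k z i true + wordCount k z i false := by
  rw [wordCount_true_add_false, wordCount, show k + 1 + z = k + z + 1 by omega,
    card_filter_powerset_range_succ, add_eq_right.mpr]
  · refine congrArg card (filter_congr fun B hB => ?_)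
    have hB := mem_powerset.1 hB
    have hN : k + z + 1 ∉ B := fun h => by simpa using hB h
    rw [descents_insert_self hB, card_insert_of_notMem hN]
    simp
  · refine card_eq_zero.2 (filter_eq_empty_iff.2 fun B hB h => ?_)
    simpa using mem_powerset.1 hB (h.2.2.2.2 rfl)

lemma wordCount_succ_right_false (k z i : ℕ) :
    wordCount k (z + 1) i false =
      #{B ∈ (range (k + z + 1)).powerset | 0 ∈ B ∧ #B = k + 1 ∧ descents (k + z + 2) B = i} := by
  rw [wordCount, show k + (z + 1) = k + z + 1 by omega, card_filter_powerset_range_succ,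
    add_eq_left.mpr]
  · refine congrArg card (filter_congr fun B hB => ?_)
    have hN : k + z + 1 ∉ B := fun h => by simpa using mem_powerset.1 hB h
    simp [hN]
  · refine card_eq_zero.2 (filter_eq_empty_iff.2 fun B _ h => ?_)
    simpa using h.2.2.2

lemma wordCount_succ_right_zero_false (k z : ℕ) :
    wordCount k (z + 1) 0 false = wordCount k z 0 false := by
  rw [wordCount_succ_right_false, wordCount]
  refine congrArg card (filter_congr fun B hB => ?_)
  rw [descents_succ (mem_powerset.1 hB)]
  simp

lemma wordCount_succ_right_succ_false (k z i : ℕ) :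
    wordCount k (z + 1) (i + 1) false = wordCount k z i true + wordCount k z (i + 1) false := by
  rw [wordCount_succ_right_false, ← card_filter_add_card_filter_not (fun B => k + z ∈ B),
    filter_filter, filter_filter, wordCount, wordCount]
  congr 1 <;> refine congrArg card (filter_congr fun B hB => ?_) <;>
    rw [descents_succ (mem_powerset.1 hB)] <;> by_cases h : k + z ∈ B <;> simp [h]

lemma wordCount_zero_left_true (z i : ℕ) :
    wordCount 0 z i true = if z = 0 ∧ i = 0 then 1 else 0 := by
  have key : ∀ B ∈ (range (0 + z + 1)).powerset,
      (0 ∈ B ∧ #B = 0 + 1 ∧ descents (0 + z + 1) B = i ∧ (0 + z ∈ B ↔ true)) ↔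
        B = {0} ∧ z = 0 ∧ i = 0 := by
    intro B _
    constructor
    · rintro ⟨h0, hcard, hdesc, hz⟩
      obtain ⟨a, rfl⟩ := card_eq_one.1 hcard
      obtain rfl := (mem_singleton.1 h0).symm
      obtain rfl : z = 0 := by simpa using hz
      exact ⟨rfl, rfl, by rw [← hdesc]; rfl⟩
    · rintro ⟨rfl, rfl, rfl⟩
      exact ⟨mem_singleton_self 0, rfl, rfl, by simp⟩
  rw [wordCount, filter_congr key]
  split_ifs with h
  · obtain ⟨rfl, rfl⟩ := h
    rfl
  · simp [h]

lemma wordCount_zero_right_false (k i : ℕ) : wordCount k 0 i false = 0 := by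
  refine card_eq_zero.2 (filter_eq_empty_iff.2 fun B hB h => ?_)
  have hB := mem_powerset.1 hB
  have : B = range (k + 0 + 1) := eq_of_subset_of_card_le hB (by simp [h.2.1])
  simpa [this] using h.2.2.2

lemma wordCount_no_descents_false (k z : ℕ) : wordCount k z 0 false = 0 := by
  induction z with
  | zero => exact wordCount_zero_right_false k 0
  | succ z ih => rw [wordCount_succ_right_zero_false, ih]

def compositionCount : ℕ → ℕ → ℕ
  | 0, 0 => 1
  | 0, _ + 1 => 0
  | _ + 1, 0 => 0
  | n + 1, k + 1 => n.choose k

lemma compositionCount_succ_succ (n k : ℕ) :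
    compositionCount (n + 1) (k + 1) = compositionCount n k + compositionCount n (k + 1) := by
  rcases n with _ | n <;> rcases k with _ | k <;> simp [compositionCount, Nat.choose_succ_succ]

def WordCountFormula (k z : ℕ) : Prop :=
  (∀ i, wordCount k z i true = k.choose i * compositionCount z i) ∧
    ∀ i, wordCount k z (i + 1) false = k.choose i * compositionCount z (i + 1)

lemma wordCount_zero_left_true_eq (z i : ℕ) :
    wordCount 0 z i true = (0 : ℕ).choose i * compositionCount z i := by
  rw [wordCount_zero_left_true]
  rcases z with _ | z <;> rcases i with _ | i <;> simp [compositionCount]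

lemma wordCount_succ_left_true_eq {k z : ℕ} (h : WordCountFormula k z) (i : ℕ) :
    wordCount (k + 1) z i true = (k + 1).choose i * compositionCount z i := by
  rw [wordCount_succ_left_true, h.1]
  rcases i with _ | i
  · simp [wordCount_no_descents_false]
  · rw [h.2, Nat.choose_succ_succ, add_mul, add_comm]

lemma wordCount_succ_right_false_eq {k z : ℕ} (h : WordCountFormula k z) (i : ℕ) :
    wordCount k (z + 1) (i + 1) false = k.choose i * compositionCount (z + 1) (i + 1) := by
  rw [wordCount_succ_right_succ_false, h.1, h.2, compositionCount_succ_succ, mul_add]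

theorem wordCountFormula (k z : ℕ) : WordCountFormula k z := by
  induction k generalizing z with
  | zero =>
    induction z with
    | zero =>
      exact ⟨wordCount_zero_left_true_eq 0,
        fun i => by simp [wordCount_zero_right_false, compositionCount]⟩
    | succ z ih => exact ⟨wordCount_zero_left_true_eq (z + 1), wordCount_succ_right_false_eq ih⟩
  | succ k ihk =>
    induction z with
    | zero =>
      exact ⟨wordCount_succ_left_true_eq (ihk 0),
        fun i => by simp [wordCount_zero_right_false, compositionCount]⟩
    | succ z ih =>
      exact ⟨wordCount_succ_left_true_eq (ihk (z + 1)), wordCount_succ_right_false_eq ih⟩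

theorem card_descents_eq_choose_mul_choose {m n i : ℕ} (hm : 0 < m) (hn : 0 < n) (hi : 0 < i) :
    #{B ∈ (range (m + n)).powerset | 0 ∈ B ∧ #B = m ∧ descents (m + n) B = i} =
      m.choose i * (n - 1).choose (i - 1) := by
  obtain ⟨k, rfl⟩ : ∃ k, m = k + 1 := ⟨m - 1, by omega⟩
  obtain ⟨z, rfl⟩ : ∃ z, n = z + 1 := ⟨n - 1, by omega⟩
  obtain ⟨j, rfl⟩ : ∃ j, i = j + 1 := ⟨i - 1, by omega⟩
  rw [show k + 1 + (z + 1) = k + (z + 1) + 1 by omega, ← wordCount_true_add_false,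
    (wordCountFormula k (z + 1)).1, (wordCountFormula k (z + 1)).2, Nat.choose_succ_succ k,
    add_mul, add_comm]
  rfl

lemma ZMod.add_one_eq_natCast_val_add_one {L : ℕ} [NeZero L] (a : ZMod L) :
    a + 1 = ((a.val + 1 : ℕ) : ZMod L) := by
  push_cast [ZMod.natCast_zmod_val]
  rfl

lemma cyclicBlocks_eq_descents_image_val {L : ℕ} [NeZero L] {A : Finset (ZMod L)}
    (h0 : 0 ∈ A) : cyclicBlocks A = descents L (A.image ZMod.val) := by
  rw [cyclicBlocks, descents, filter_image, card_image_of_injective _ (ZMod.val_injective L)]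
  refine congrArg card (filter_congr fun a _ => ?_)
  rw [ZMod.add_one_eq_natCast_val_add_one]
  obtain hlt | heq : a.val + 1 < L ∨ a.val + 1 = L := by have := ZMod.val_lt a; omega
  · have hval : ((a.val + 1 : ℕ) : ZMod L).val = a.val + 1 := ZMod.val_natCast_of_lt hlt
    have hmem : a.val + 1 ∈ A.image ZMod.val ↔ ((a.val + 1 : ℕ) : ZMod L) ∈ A := by
      rw [← (ZMod.val_injective L).mem_finset_image, hval]
    simp only [hmem, hlt, and_true]
  · simp [h0, heq]

lemma image_val_image_natCast {L : ℕ} [NeZero L] {B : Finset ℕ} (hB : B ⊆ range L) :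
    (B.image (Nat.cast : ℕ → ZMod L)).image ZMod.val = B := by
  rw [image_image]
  exact (image_congr fun b hb => ZMod.val_natCast_of_lt (mem_range.1 (hB hb))).trans image_id

lemma natCard_finset_zmod_eq (L : ℕ) [NeZero L] (p : Finset ℕ → Prop) [DecidablePred p] :
    Nat.card {A : Finset (ZMod L) // p (A.image ZMod.val)} =
      #{B ∈ (range L).powerset | p B} := by
  rw [Nat.card_eq_fintype_card, Fintype.card_subtype]
  refine card_nbij' (·.image ZMod.val) (·.image Nat.cast) ?_ ?_ ?_ ?_
  · intro A hA
    simp only [coe_filter, mem_univ, true_and, Set.mem_ofPred_eq, mem_powerset] at hA ⊢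
    refine ⟨fun b hb => ?_, hA⟩
    obtain ⟨a, -, rfl⟩ := mem_image.1 hb
    exact mem_range.2 (ZMod.val_lt a)
  · intro B hB
    simp only [coe_filter, mem_powerset, Set.mem_ofPred_eq, mem_univ, true_and] at hB ⊢
    rw [image_val_image_natCast hB.1]
    exact hB.2
  · intro A _
    simp [image_image]
  · intro B hB
    simp only [coe_filter, mem_powerset, Set.mem_ofPred_eq] at hB
    exact image_val_image_natCast hB.1

theorem count_subsets_with_blocks_containing_zero_general (m n i : ℕ)
    (hm : 3 ≤ m) (hn : 3 ≤ n) (hi2 : 2 ≤ i) :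
    Nat.card {A : Finset (ZMod (m + n)) //
        A.card = m ∧ cyclicBlocks A = i ∧ (0 : ZMod (m + n)) ∈ A}
      = m.choose i * (n - 1).choose (i - 1) := by
  have : NeZero (m + n) := ⟨by omega⟩
  have hA (A : Finset (ZMod (m + n))) : (A.card = m ∧ cyclicBlocks A = i ∧ 0 ∈ A) ↔
      (0 ∈ A.image ZMod.val ∧ #(A.image ZMod.val) = m ∧
        descents (m + n) (A.image ZMod.val) = i) := by
    have h0 : 0 ∈ A.image ZMod.val ↔ 0 ∈ A := by simp [ZMod.val_eq_zero]
    rw [h0, card_image_of_injective _ (ZMod.val_injective _)]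
    constructor
    · rintro ⟨hcard, hblocks, hzero⟩
      exact ⟨hzero, hcard, cyclicBlocks_eq_descents_image_val hzero ▸ hblocks⟩
    · rintro ⟨hzero, hcard, hdesc⟩
      exact ⟨hcard, (cyclicBlocks_eq_descents_image_val hzero).trans hdesc, hzero⟩
  rw [Nat.card_congr (Equiv.subtypeEquivRight hA),
    natCard_finset_zmod_eq (m + n) fun B => 0 ∈ B ∧ #B = m ∧ descents (m + n) B = i]
  exact card_descents_eq_choose_mul_choose (by omega) (by omega) (by omega)

/-- For `m, n ≥ 3` and `2 ≤ i ≤ min m n`, the number of subsets `A` of `ZMod (m+n)` with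
`|A| = m`, exactly `i` cyclic blocks, and `0 ∈ A` equals `C(m, i) · C(n-1, i-1)`.
(These are the vertex sets of the `m`-cycles, containing the vertex `v₁ = 0`, occurring in
a pair of disjoint monotonic `m`- and `n`-cycles in `K_{m+n}` each with `i` interior
edges.) -/
theorem count_subsets_with_blocks_containing_zero (m n i : ℕ)
    (hm : 3 ≤ m) (hn : 3 ≤ n) (hi2 : 2 ≤ i) (hi : i ≤ min m n) :
    Nat.card {A : Finset (ZMod (m + n)) //
        A.card = m ∧ cyclicBlocks A = i ∧ (0 : ZMod (m + n)) ∈ A}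
      = m.choose i * (n - 1).choose (i - 1) :=
  count_subsets_with_blocks_containing_zero_general m n i hm hn hi2
end

section
/- Let m, n ≥ 3 and 2 ≤ i ≤ min(m, n). The number of subsets A of ZMod (m+n) with |A| = m and exactly i cyclic blocks equals C(m, i) · C(n−1, i−1) + C(n, i) · C(m−1, i−1). Consequently, when m ≠ n this is the number of unordered pairs of disjoint monotonic cycles of lengths m and n in a book embedding of K_{m+n} each having i interior edges, and when m = n the number of such unordered pairs is half this quantity, namely C(n, i) · C(n−1, i−1). -/
open Finset

def blockCount {α : Type*} [DecidableEq α] [Add α] [One α] (A : Finset α) : ℕ :=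
  #{a ∈ A | a + 1 ∉ A}

theorem cyclicBlocks_eq_blockCount {N : ℕ} (A : Finset (ZMod N)) :
    cyclicBlocks A = blockCount A := rfl

theorem blockCount_image {α β : Type*} [DecidableEq α] [Add α] [One α] [DecidableEq β] [Add β]
    [One β] {f : α → β} (hf : ∀ a, f (a + 1) = f a + 1) {s : Set α} (hinj : s.InjOn f)
    {A : Finset α} (hA : ∀ a ∈ A, a ∈ s ∧ a + 1 ∈ s) :
    blockCount (A.image f) = blockCount A := by
  have hAs : (A : Set α) ⊆ s := fun a ha => (hA a ha).1
  have hsucc : ∀ a ∈ A, f a + 1 ∈ A.image f ↔ a + 1 ∈ A := fun a ha => by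
    rw [← hf, ← mem_coe, coe_image, hinj.mem_image_iff hAs (hA a ha).2, mem_coe]
  rw [blockCount, blockCount, filter_image, filter_congr fun a ha => not_congr (hsucc a ha),
    card_image_of_injOn (hinj.mono fun a ha => hAs (mem_filter.1 ha).1)]

theorem blockCount_compl {G : Type*} [AddGroupWithOne G] [Fintype G] [DecidableEq G]
    (A : Finset G) : blockCount Aᶜ = blockCount A := by
  set B : Finset G := {a | a + 1 ∈ A}
  have hB : #B = #A := card_equiv (Equiv.addRight 1) fun a => by simp [B]
  have hA : blockCount A = #(A \ B) := by
    rw [blockCount]; congr 1; ext; simp [B]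
  have hAc : blockCount Aᶜ = #(B \ A) := by
    rw [blockCount]; congr 1; ext; simp [B, and_comm]
  rw [hA, hAc, card_sdiff_comm hB]

section Nat

theorem blockCount_singleton (a : ℕ) : blockCount {a} = 1 := by
  simp [blockCount, filter_singleton]

theorem blockCount_pos {S : Finset ℕ} (hS : S.Nonempty) : 0 < blockCount S :=
  card_pos.2 ⟨S.max' hS, mem_filter.2 ⟨S.max'_mem hS, fun h =>
    (S.le_max' _ h).not_gt (Nat.lt_succ_self _)⟩⟩

theorem blockCount_insert_of_forall_add_one_lt {S : Finset ℕ} {a : ℕ}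
    (h : ∀ x ∈ S, x + 1 < a) : blockCount (insert a S) = blockCount S + 1 := by
  have hfilter : {x ∈ insert a S | x + 1 ∉ insert a S} = insert a {x ∈ S | x + 1 ∉ S} := by
    ext x
    simp only [mem_filter, mem_insert]
    grind
  rw [blockCount, hfilter, card_insert_of_notMem fun h' => by grind]
  rfl

theorem blockCount_insert_add_one {S : Finset ℕ} {a : ℕ} (ha : a ∈ S) (h : ∀ x ∈ S, x ≤ a) :
    blockCount (insert (a + 1) S) = blockCount S := by
  have hfilter : {x ∈ insert (a + 1) S | x + 1 ∉ insert (a + 1) S}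
      = insert (a + 1) ({x ∈ S | x + 1 ∉ S}.erase a) := by
    ext x
    simp only [mem_filter, mem_insert, mem_erase]
    grind
  have haF : a ∈ {x ∈ S | x + 1 ∉ S} := mem_filter.2 ⟨ha, fun h' => by grind⟩
  rw [blockCount, hfilter, card_insert_of_notMem fun h' => by grind, card_erase_add_one haF]
  rfl

def linearCount (L m i : ℕ) : ℕ :=
  #{S ∈ (range L).powerset | #S = m ∧ blockCount S = i}

/-- Counts the subsets of `range (L + 1)` that contain `L`, through their trace on `range L`. -/
def cappedCount (L m i : ℕ) : ℕ :=
  #{T ∈ (range L).powerset | #T = m ∧ blockCount (insert L T) = i}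

theorem linearCount_eq_zero_of_lt {L m : ℕ} (h : L < m) (i : ℕ) : linearCount L m i = 0 := by
  refine card_eq_zero.2 (filter_eq_empty_iff.2 fun S hS hSm => ?_)
  have := card_le_card (mem_powerset.1 hS)
  rw [card_range] at this
  omega

theorem linearCount_succ_zero (L m : ℕ) : linearCount L (m + 1) 0 = 0 :=
  card_eq_zero.2 (filter_eq_empty_iff.2 fun _ _ hS =>
    (blockCount_pos (card_pos.1 (by omega))).ne' hS.2)

theorem linearCount_succ_succ (L m i : ℕ) :
    linearCount (L + 1) (m + 1) i = linearCount L (m + 1) i + cappedCount L m i := by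
  simp only [linearCount, cappedCount, card_filter, range_add_one,
    sum_powerset_insert notMem_range_self]
  congr 1
  refine sum_congr rfl fun T hT => ?_
  simp only [card_insert_of_notMem fun h => notMem_range_self (mem_powerset.1 hT h),
    Nat.add_right_cancel_iff]

theorem cappedCount_succ_succ_succ (L m i : ℕ) :
    cappedCount (L + 1) (m + 1) (i + 1) = linearCount L (m + 1) i + cappedCount L m (i + 1) := by
  simp only [linearCount, cappedCount, card_filter, range_add_one,
    sum_powerset_insert notMem_range_self]
  congr 1 <;> refine sum_congr rfl fun T hT => ?_
  · have hT' : ∀ x ∈ T, x < L := fun x hx => mem_range.1 (mem_powerset.1 hT hx)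
    have hins : blockCount (insert (L + 1) T) = blockCount T + 1 :=
      blockCount_insert_of_forall_add_one_lt fun x hx => by have := hT' x hx; omega
    simp only [hins, Nat.add_right_cancel_iff]
  · have hT' : ∀ x ∈ T, x < L := fun x hx => mem_range.1 (mem_powerset.1 hT hx)
    simp only [blockCount_insert_add_one (mem_insert_self L T)
      (by simpa using fun x hx => (hT' x hx).le), card_insert_of_notMem fun h => (hT' L h).false,
      Nat.add_right_cancel_iff]

theorem cappedCount_eq_of_linearCount_eq {k : ℕ}
    (hlin : ∀ m i, linearCount (m + k) (m + 1) (i + 1) = m.choose i * k.choose (i + 1))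
    (m i : ℕ) : cappedCount (m + k) m (i + 1) = m.choose i * k.choose i := by
  induction m generalizing i with
  | zero =>
    rw [cappedCount, zero_add, ← filter_filter, ← powersetCard_eq_filter, powersetCard_zero,
      filter_singleton]
    cases i <;> simp [blockCount_singleton]
  | succ m ih =>
    rw [add_right_comm, cappedCount_succ_succ_succ, ih]
    cases i with
    | zero => simp [linearCount_succ_zero]
    | succ i => rw [hlin, Nat.choose_succ_succ' m]; ring

theorem linearCount_eq (k m i : ℕ) :
    linearCount (m + k) (m + 1) (i + 1) = m.choose i * k.choose (i + 1) := by
  induction k generalizing m i with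
  | zero => simp [linearCount_eq_zero_of_lt (Nat.lt_succ_self m)]
  | succ k ih =>
    rw [← add_assoc, linearCount_succ_succ, ih, cappedCount_eq_of_linearCount_eq ih,
      Nat.choose_succ_succ' k]
    ring

end Nat

section ZMod

theorem natCast_add_one_injOn {N : ℕ} : (Set.Iio N).InjOn fun x : ℕ => (x + 1 : ZMod N) := by
  intro x hx y hy h
  have := congrArg ZMod.val (add_right_cancel h)
  rwa [ZMod.val_cast_of_lt hx, ZMod.val_cast_of_lt hy] at this

variable {N : ℕ} [NeZero N]

theorem image_natCast_add_one_range :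
    (range (N - 1)).image (fun x : ℕ => (x + 1 : ZMod N)) = univ.erase 0 := by
  have hinj : ((range (N - 1) : Finset ℕ) : Set ℕ).InjOn fun x : ℕ => (x + 1 : ZMod N) :=
    natCast_add_one_injOn.mono fun x hx => by simp at hx ⊢; omega
  refine eq_of_subset_of_card_le (fun a ha => ?_) ?_
  · obtain ⟨x, hx, rfl⟩ := mem_image.1 ha
    rw [mem_range] at hx
    rw [mem_erase, ← Nat.cast_succ, Ne, ZMod.natCast_eq_zero_iff]
    exact ⟨fun hdvd => (Nat.le_of_dvd x.succ_pos hdvd).not_gt (by omega), mem_univ _⟩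
  · rw [card_image_of_injOn hinj, card_erase_of_mem (mem_univ _), card_univ, ZMod.card,
      card_range]

theorem card_filter_zero_notMem_eq_linearCount (m i : ℕ) :
    #{A : Finset (ZMod N) | #A = m ∧ cyclicBlocks A = i ∧ 0 ∉ A} = linearCount (N - 1) m i := by
  set f : ℕ → ZMod N := fun x => x + 1
  have hrange : ∀ S ⊆ range (N - 1), (S : Set ℕ) ⊆ Set.Iio N := fun S hS x hx => by
    have := mem_range.1 (hS hx); simp only [Set.mem_Iio]; omega
  have hinj : ∀ S ⊆ range (N - 1), (S : Set ℕ).InjOn f := fun S hS =>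
    natCast_add_one_injOn.mono (hrange S hS)
  have hblocks : ∀ S ⊆ range (N - 1), cyclicBlocks (S.image f) = blockCount S := fun S hS =>
    blockCount_image (fun x => by simp) natCast_add_one_injOn fun x hx =>
      ⟨hrange S hS hx, by have := mem_range.1 (hS hx); simp only [Set.mem_Iio]; omega⟩
  symm
  refine card_nbij (fun S => S.image f) (fun S hS => ?_) (fun S hS T hT hST => ?_)
    (fun A hA => ?_)
  · obtain ⟨hS, hSm, hSi⟩ := by simpa using hS
    have h0 : 0 ∉ S.image f := fun h => by
      have := image_subset_image (f := f) hS h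
      rw [image_natCast_add_one_range] at this
      simp at this
    simpa [card_image_of_injOn (hinj S hS), hblocks S hS, hSm, hSi] using h0
  · simp only [coe_filter, mem_powerset, Set.mem_ofPred_eq] at hS hT
    rw [← coe_inj, coe_image, coe_image] at hST
    exact coe_injective ((hinj _ (union_subset hS.1 hT.1)).image_eq_image_iff
      (by simp) (by simp) |>.1 (by simpa using hST))
  · obtain ⟨hAm, hAi, hA0⟩ := by simpa using hA
    have hsub : A ⊆ (range (N - 1)).image f := by
      rw [image_natCast_add_one_range]; intro a ha; simpa using ne_of_mem_of_not_mem ha hA0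
    obtain ⟨S, hS, rfl⟩ := subset_image_iff.1 hsub
    refine ⟨S, ?_, rfl⟩
    simp [hS, ← card_image_of_injOn (hinj S hS), hAm, ← hblocks S hS, hAi]

theorem card_filter_zero_notMem_eq_choose {a b : ℕ} (h : N = a + 1 + b) (i : ℕ) :
    #{A : Finset (ZMod N) | #A = a + 1 ∧ cyclicBlocks A = i + 1 ∧ 0 ∉ A}
      = a.choose i * b.choose (i + 1) := by
  rw [card_filter_zero_notMem_eq_linearCount, show N - 1 = a + b by omega, linearCount_eq]

theorem card_filter_zero_mem_eq_card_filter_zero_notMem {m n : ℕ} (h : m + n = N) (i : ℕ) :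
    #{A : Finset (ZMod N) | #A = m ∧ cyclicBlocks A = i ∧ 0 ∈ A}
      = #{A : Finset (ZMod N) | #A = n ∧ cyclicBlocks A = i ∧ 0 ∉ A} := by
  refine card_equiv (compl_involutive.toPerm _) fun A => ?_
  have hcard := card_add_card_compl A
  rw [ZMod.card] at hcard
  rw [mem_filter_univ, mem_filter_univ]
  simp only [Function.Involutive.coe_toPerm, mem_compl, not_not, cyclicBlocks_eq_blockCount,
    blockCount_compl]
  constructor <;> rintro ⟨hc, hi, h0⟩ <;> exact ⟨by omega, hi, h0⟩

end ZMod

theorem count_subsets_with_blocks_general (m n i : ℕ)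
    (hm : 3 ≤ m) (hn : 3 ≤ n) (hi2 : 2 ≤ i) :
    Nat.card {A : Finset (ZMod (m + n)) // A.card = m ∧ cyclicBlocks A = i}
      = m.choose i * (n - 1).choose (i - 1) + n.choose i * (m - 1).choose (i - 1)
    ∧ (m = n →
      Nat.card {A : Finset (ZMod (m + n)) //
          A.card = n ∧ cyclicBlocks A = i ∧ (0 : ZMod (m + n)) ∈ A}
        = n.choose i * (n - 1).choose (i - 1)) := by
  obtain ⟨a, rfl⟩ : ∃ a, m = a + 1 := ⟨m - 1, by omega⟩
  obtain ⟨b, rfl⟩ : ∃ b, n = b + 1 := ⟨n - 1, by omega⟩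
  obtain ⟨j, rfl⟩ : ∃ j, i = j + 1 := ⟨i - 1, by omega⟩
  have hA := card_filter_zero_notMem_eq_choose (N := a + 1 + (b + 1)) (a := a) (b := b + 1) rfl j
  have hB := card_filter_zero_notMem_eq_choose (N := a + 1 + (b + 1)) (a := b) (b := a + 1)
    (by ring) j
  simp only [Nat.card_eq_fintype_card, Fintype.card_subtype, Nat.add_sub_cancel]
  refine ⟨?_, fun hab => ?_⟩
  · rw [← card_filter_add_card_filter_not (0 ∈ ·), filter_filter, filter_filter]
    simp only [and_assoc]
    rw [card_filter_zero_mem_eq_card_filter_zero_notMem rfl, hA, hB]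
    ring
  · obtain rfl : a = b := by omega
    rw [card_filter_zero_mem_eq_card_filter_zero_notMem rfl, hA, mul_comm]

/-- For `m, n ≥ 3` and `2 ≤ i ≤ min m n`, the number of subsets `A` of `ZMod (m+n)` with
`|A| = m` and exactly `i` cyclic blocks equals `C(m,i)·C(n-1,i-1) + C(n,i)·C(m-1,i-1)`.
When `m ≠ n` this is the number of unordered pairs of disjoint monotonic cycles of lengths
`m` and `n` in a book embedding of `K_{m+n}` each with `i` interior edges; when `m = n`
the number of such unordered pairs (each represented by its unique member containing the
vertex `0`) is half this quantity, namely `C(n,i)·C(n-1,i-1)`. -/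
theorem count_subsets_with_blocks (m n i : ℕ)
    (hm : 3 ≤ m) (hn : 3 ≤ n) (hi2 : 2 ≤ i) (hi : i ≤ min m n) :
    Nat.card {A : Finset (ZMod (m + n)) // A.card = m ∧ cyclicBlocks A = i}
      = m.choose i * (n - 1).choose (i - 1) + n.choose i * (m - 1).choose (i - 1)
    ∧ (m = n →
      Nat.card {A : Finset (ZMod (m + n)) //
          A.card = n ∧ cyclicBlocks A = i ∧ (0 : ZMod (m + n)) ∈ A}
        = n.choose i * (n - 1).choose (i - 1)) :=
  count_subsets_with_blocks_general m n i hm hn hi2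
end

section
/- For every n ≥ 3, the rational number M(n) := (∑_{i=2}^{n} (i/6) · C(n, i) · C(n−1, i−1)) / C(2n−1, n−1) satisfies M(n) = (n/6) · ( n/(2n−1) − 1/C(2n−1, n−1) ). -/
/-!
The absorption identity `i · C(n,i) = n · C(n-1,i-1)` turns the numerator into `n/6` times
`∑_{j ≥ 1} C(n-1,j)²`, which by Vandermonde is `C(2n-2,n-1) - 1`. Dividing by
`C(2n-1,n-1) = (2n-1)/n · C(2n-2,n-1)` gives the closed form.
-/

open Finset

namespace Nat

theorem mul_choose_eq_mul_choose_pred {n i : ℕ} (hi : 1 ≤ i) :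
    i * n.choose i = n * (n - 1).choose (i - 1) := by
  obtain ⟨j, rfl⟩ := Nat.exists_eq_add_of_le' hi
  rcases n with _ | m
  · simp
  simpa [mul_comm] using (add_one_mul_choose_eq m j).symm

theorem sum_Icc_mul_choose_mul_choose_pred (n : ℕ) :
    ∑ i ∈ Icc 1 n, i * n.choose i * (n - 1).choose (i - 1) = n * (2 * (n - 1)).choose (n - 1) := by
  rcases n with _ | m
  · simp
  calc ∑ i ∈ Icc 1 (m + 1), i * (m + 1).choose i * m.choose (i - 1)
      = ∑ i ∈ Icc 1 (m + 1), (m + 1) * m.choose (i - 1) ^ 2 := by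
        refine sum_congr rfl fun i hi => ?_
        rw [mul_choose_eq_mul_choose_pred (mem_Icc.1 hi).1, Nat.add_sub_cancel, sq, mul_assoc]
    _ = (m + 1) * ∑ j ∈ range (m + 1), m.choose j ^ 2 := by
        rw [← mul_sum, ← Ico_add_one_right_eq_Icc, sum_Ico_eq_sum_range]
        simp [add_comm]
    _ = (m + 1) * (2 * m).choose m := by rw [sum_range_choose_sq]

theorem add_one_mul_choose_two_mul_add_one (m : ℕ) :
    (m + 1) * (2 * m + 1).choose m = (2 * m + 1) * (2 * m).choose m := by
  rw [add_one_mul_choose_eq, choose_symm_half, mul_comm]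

end Nat

theorem mean_squared_linking_closed_form_general (n : ℕ) :
    (∑ i ∈ Finset.Icc 2 n,
        ((i : ℚ) / 6) * n.choose i * (n - 1).choose (i - 1)) / (2 * n - 1).choose (n - 1)
      = ((n : ℚ) / 6) *
        ((n : ℚ) / (2 * (n : ℚ) - 1) - 1 / (2 * n - 1).choose (n - 1)) := by
  rcases n with _ | m
  · simp
  have hsum : ∑ i ∈ Icc 2 (m + 1), (i : ℚ) * (m + 1).choose i * m.choose (i - 1)
      = (m + 1) * ((2 * m).choose m - 1) := by
    have h := Nat.sum_Icc_mul_choose_mul_choose_pred (m + 1)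
    rw [Icc_eq_cons_Ioc (by omega), sum_cons, ← Icc_add_one_left_eq_Ioc] at h
    simp only [Nat.add_sub_cancel] at h
    rw [mul_sub, mul_one, eq_sub_iff_add_eq']
    exact_mod_cast by simpa using h
  have hsum6 : ∑ i ∈ Icc 2 (m + 1), (i : ℚ) / 6 * (m + 1).choose i * m.choose (i - 1)
      = (∑ i ∈ Icc 2 (m + 1), (i : ℚ) * (m + 1).choose i * m.choose (i - 1)) / 6 := by
    rw [sum_div]
    exact sum_congr rfl fun i _ => by ring
  have hratio : ((m : ℚ) + 1) * (2 * m + 1).choose m = (2 * m + 1) * (2 * m).choose m := by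
    exact_mod_cast Nat.add_one_mul_choose_two_mul_add_one m
  have hpos : ((2 * m + 1).choose m : ℚ) ≠ 0 := by
    exact_mod_cast (Nat.choose_pos (by omega)).ne'
  simp only [Nat.add_sub_cancel, Nat.cast_add_one, show 2 * (m + 1) - 1 = 2 * m + 1 by omega]
  rw [hsum6, hsum, show 2 * ((m : ℚ) + 1) - 1 = 2 * m + 1 by ring]
  field_simp
  linear_combination -hratio

/-- For every `n ≥ 3`, the mean squared linking number
`M(n) = (∑_{i=2}^{n} (i/6) · C(n,i) · C(n-1,i-1)) / C(2n-1, n-1)` of two disjoint monotonic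
`n`-cycles over all pairs of such cycles across all random book embeddings of `K_{2n}`
satisfies `M(n) = (n/6) · (n/(2n-1) - 1/C(2n-1, n-1))`. -/
theorem mean_squared_linking_closed_form (n : ℕ) (hn : 3 ≤ n) :
    (∑ i ∈ Finset.Icc 2 n,
        ((i : ℚ) / 6) * n.choose i * (n - 1).choose (i - 1)) / (2 * n - 1).choose (n - 1)
      = ((n : ℚ) / 6) *
        ((n : ℚ) / (2 * (n : ℚ) - 1) - 1 / (2 * n - 1).choose (n - 1)) :=
  mean_squared_linking_closed_form_general n
end

section
/- For every n ≥ 3, the rational number M(n) := (∑_{i=2}^{n} (i/6) · C(n, i) · C(n−1, i−1)) / C(2n−1, n−1) satisfies n/12 ≤ M(n) ≤ n/6. In particular, the mean squared linking number of two disjoint n-cycles taken over all pairs of disjoint monotonic n-cycles across all random book embeddings of K_{2n} grows linearly, i.e., is of order Θ(n). -/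
/-!
Write `n = m + 1`. Since `i · C(m+1, i) = (m+1) · C(m, i-1)`, Vandermonde's identity
`∑ₖ C(m, k)² = C(2m, m)` turns the numerator into `(m+1)(C(2m, m) - 1)/6`, while
`C(2m+1, m) = (2m+1)/(m+1) · C(2m, m)`. Hence
`M(n) = (m+1)² / (6(2m+1)) · (1 - 1/C(2m, m))`: the upper bound is immediate, and the lower
bound reduces to `C(2m, m) ≥ 2m + 2`, which holds for `m ≥ 2` because `C(2m, m) ≥ C(2m, 2)`.
-/

open Finset Nat

theorem sum_Icc_one_choose_sq_add_one (m : ℕ) :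
    ∑ k ∈ Icc 1 m, m.choose k ^ 2 + 1 = m.centralBinom := by
  rw [centralBinom_eq_two_mul_choose, ← sum_range_choose_sq, range_eq_Ico,
    sum_eq_sum_Ico_succ_bot (succ_pos m), ← Ico_add_one_right_eq_Icc, choose_zero_right, add_comm]
  rfl

theorem sum_Icc_two_mul_choose_mul_choose (m : ℕ) :
    ∑ i ∈ Icc 2 (m + 1), (i : ℚ) * (m + 1).choose i * m.choose (i - 1)
      = (m + 1) * (m.centralBinom - 1) := by
  have hterm : ∀ k, ((k + 1 : ℕ) : ℚ) * (m + 1).choose (k + 1) * m.choose k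
      = (m + 1) * (m.choose k ^ 2 : ℕ) := fun k => by
    have h : ((m + 1) * m.choose k : ℚ) = (m + 1).choose (k + 1) * (k + 1) := by
      exact_mod_cast add_one_mul_choose_eq m k
    push_cast
    linear_combination (-(m.choose k : ℚ)) * h
  have hshift : Icc 2 (m + 1) = (Icc 1 m).map (addRightEmbedding 1) := by
    rw [map_add_right_Icc]
  rw [hshift, sum_map]
  simp only [addRightEmbedding_apply, Nat.add_sub_cancel, hterm, ← mul_sum]
  rw [← sum_Icc_one_choose_sq_add_one]
  push_cast
  ring

theorem two_mul_add_two_le_centralBinom {m : ℕ} (hm : 2 ≤ m) : 2 * m + 2 ≤ m.centralBinom := by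
  refine le_trans ?_ (choose_le_centralBinom 2 m)
  rw [choose_two_right, Nat.le_div_iff_mul_le two_pos]
  obtain ⟨k, rfl⟩ := Nat.exists_eq_add_of_le hm
  have : 2 * (2 + k) - 1 = 2 * k + 3 := by omega
  rw [this]
  nlinarith

theorem choose_two_mul_add_one_mul (m : ℕ) :
    (2 * m + 1).choose m * (m + 1) = (2 * m + 1) * m.centralBinom := by
  rw [← choose_symm_half, ← add_one_mul_choose_eq, centralBinom_eq_two_mul_choose]

/-- For every `n ≥ 3`, the mean squared linking number
`M(n) = (∑_{i=2}^{n} (i/6) · C(n,i) · C(n-1,i-1)) / C(2n-1, n-1)` of two disjoint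
`n`-cycles, taken over all pairs of disjoint monotonic `n`-cycles across all random book
embeddings of `K_{2n}`, satisfies `n/12 ≤ M(n) ≤ n/6`; in particular it is `Θ(n)`. -/
theorem mean_squared_linking_bounds (n : ℕ) (hn : 3 ≤ n) :
    (n : ℚ) / 12 ≤
      (∑ i ∈ Finset.Icc 2 n,
        ((i : ℚ) / 6) * n.choose i * (n - 1).choose (i - 1)) / (2 * n - 1).choose (n - 1)
    ∧ (∑ i ∈ Finset.Icc 2 n,
        ((i : ℚ) / 6) * n.choose i * (n - 1).choose (i - 1)) / (2 * n - 1).choose (n - 1)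
      ≤ (n : ℚ) / 6 := by
  obtain ⟨m, rfl⟩ : ∃ m, n = m + 1 := ⟨n - 1, by omega⟩
  rw [show 2 * (m + 1) - 1 = 2 * m + 1 by omega, Nat.add_sub_cancel]
  have hsum : ∑ i ∈ Icc 2 (m + 1), ((i : ℚ) / 6) * (m + 1).choose i * m.choose (i - 1)
      = (m + 1) * (m.centralBinom - 1) / 6 := by
    rw [← sum_Icc_two_mul_choose_mul_choose, sum_div]
    exact sum_congr rfl fun i _ => by ring
  have hden : ((2 * m + 1).choose m : ℚ) * (m + 1) = (2 * m + 1) * m.centralBinom := by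
    exact_mod_cast choose_two_mul_add_one_mul m
  have hC : (2 * m + 2 : ℚ) ≤ m.centralBinom := by
    exact_mod_cast two_mul_add_two_le_centralBinom (by omega)
  have hD : (0 : ℚ) < 6 * (2 * m + 1).choose m := by
    have := choose_pos (show m ≤ 2 * m + 1 by omega)
    positivity
  rw [hsum, div_div, le_div_iff₀ hD, div_le_iff₀ hD]
  push_cast
  constructor <;> nlinarith
end

section
/- Let i be a natural number and let x be a real number with |x| < 1. Then the function t ↦ (1−i)/t + (1 − exp((t−1)·x) + (t−1)·x·exp((t−1)·x)) / ((t−1)·(t − exp((t−1)·x))) tends to (1−i) + x²/(2(1−x)) as t tends to 1 with t ≠ 1 (limit along the punctured neighborhood filter 𝓝[≠] 1). -/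
/-!
Put `s = t - 1`. The second summand is `N(s)/s²` divided by `(s + 1 - e^{sx})/s`, where
`N(s) = 1 - e^{sx} + s x e^{sx}`. Since `N'(s) = s x² e^{sx}`, L'Hôpital's rule gives
`N(s)/s² → x²/2`, while `(s + 1 - e^{sx})/s → 1 - x` because `e^{sx}` has derivative `x` at `0`.
As `x ≠ 1`, the quotient tends to `x²/(2(1 - x))`.
-/

open Filter Real Topology

lemma hasDerivAt_one_sub_exp_add_mul_exp (x s : ℝ) :
    HasDerivAt (fun s ↦ 1 - exp (s * x) + s * x * exp (s * x)) (s * x ^ 2 * exp (s * x)) s := by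
  have hexp : HasDerivAt (fun s ↦ exp (s * x)) (exp (s * x) * x) s :=
    (hasDerivAt_mul_const x).exp
  exact ((hexp.const_sub 1).fun_add ((hasDerivAt_mul_const x).fun_mul hexp)).congr_deriv (by ring)

lemma tendsto_one_sub_exp_add_mul_exp_div_sq (x : ℝ) :
    Tendsto (fun s ↦ (1 - exp (s * x) + s * x * exp (s * x)) / s ^ 2) (𝓝[≠] 0)
      (𝓝 (x ^ 2 / 2)) := by
  refine HasDerivAt.lhopital_zero_nhdsNE (f' := fun s ↦ s * x ^ 2 * exp (s * x))
    (g' := fun s ↦ 2 * s) (.of_forall (hasDerivAt_one_sub_exp_add_mul_exp x))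
    (.of_forall fun s ↦ by simpa using hasDerivAt_pow 2 s) ?_ ?_ ?_ ?_
  · filter_upwards [self_mem_nhdsWithin] with s hs
    simpa using hs
  · exact tendsto_nhdsWithin_of_tendsto_nhds (by
      simpa using (by fun_prop : Continuous fun s ↦ 1 - exp (s * x) + s * x * exp (s * x)).tendsto 0)
  · exact tendsto_nhdsWithin_of_tendsto_nhds (by simpa using (continuous_pow 2).tendsto (0 : ℝ))
  · have hlim : Tendsto (fun s ↦ x ^ 2 * exp (s * x) / 2) (𝓝[≠] 0) (𝓝 (x ^ 2 / 2)) :=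
      tendsto_nhdsWithin_of_tendsto_nhds (by
        simpa using (by fun_prop : Continuous fun s ↦ x ^ 2 * exp (s * x) / 2).tendsto 0)
    refine hlim.congr' ?_
    filter_upwards [self_mem_nhdsWithin] with s (hs : s ≠ 0)
    field_simp

lemma tendsto_add_one_sub_exp_mul_div (x : ℝ) :
    Tendsto (fun s ↦ (s + 1 - exp (s * x)) / s) (𝓝[≠] 0) (𝓝 (1 - x)) := by
  have hslope := ((hasDerivAt_mul_const x).exp (x := (0 : ℝ))).tendsto_slope_zero
  simp only [zero_add, zero_mul, exp_zero, one_mul, smul_eq_mul] at hslope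
  refine (tendsto_const_nhds.sub hslope).congr' ?_
  filter_upwards [self_mem_nhdsWithin] with s (hs : s ≠ 0)
  field_simp
  ring

lemma tendsto_one_sub_exp_add_mul_exp_div (x : ℝ) (hx : x ≠ 1) :
    Tendsto (fun s ↦ (1 - exp (s * x) + s * x * exp (s * x)) / (s * (s + 1 - exp (s * x))))
      (𝓝[≠] 0) (𝓝 (x ^ 2 / (2 * (1 - x)))) := by
  rw [← div_div]
  refine ((tendsto_one_sub_exp_add_mul_exp_div_sq x).div (tendsto_add_one_sub_exp_mul_div x)
    (sub_ne_zero.2 hx.symm)).congr' ?_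
  filter_upwards [self_mem_nhdsWithin] with s (hs : s ≠ 0)
  simp only [Pi.div_apply]
  field_simp

/-- For `i : ℕ` and `|x| < 1`, the logarithmic derivative of the exponential generating
function of the Eulerian numbers,
`t ↦ (1-i)/t + (1 - e^{(t-1)x} + (t-1)·x·e^{(t-1)x}) / ((t-1)(t - e^{(t-1)x}))`,
tends to `(1-i) + x²/(2(1-x))` as `t → 1`, `t ≠ 1`. -/
theorem log_deriv_egf_tendsto_at_one (i : ℕ) (x : ℝ) (hx : |x| < 1) :
    Tendsto (fun t : ℝ =>
        (1 - (i : ℝ)) / t +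
          (1 - Real.exp ((t - 1) * x) + (t - 1) * x * Real.exp ((t - 1) * x)) /
            ((t - 1) * (t - Real.exp ((t - 1) * x))))
      (nhdsWithin 1 {(1 : ℝ)}ᶜ)
      (nhds ((1 - (i : ℝ)) + x ^ 2 / (2 * (1 - x)))) := by
  have hshift : Tendsto (fun t : ℝ ↦ t - 1) (𝓝[≠] 1) (𝓝[≠] 0) := by
    simpa using ((hasDerivAt_id (1 : ℝ)).sub_const 1).tendsto_nhdsNE one_ne_zero
  have hfirst : Tendsto (fun t : ℝ ↦ (1 - (i : ℝ)) / t) (𝓝[≠] 1) (𝓝 ((1 - (i : ℝ)) / 1)) :=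
    tendsto_nhdsWithin_of_tendsto_nhds (tendsto_const_nhds.div tendsto_id one_ne_zero)
  rw [div_one] at hfirst
  have hsecond := (tendsto_one_sub_exp_add_mul_exp_div x (abs_lt.1 hx).2.ne).comp hshift
  refine hfirst.add (hsecond.congr fun t ↦ ?_)
  simp only [Function.comp_apply, sub_add_cancel]
end
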